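/- Let (Z, W, ▷, ◁, ↼, ⇀) be a matched pair of Zinbiel algebras and r: W → Z a deformation map. Define W_r to be the vector space W with new multiplication u ·_r v := u·v + u◁r(v) + r(u)▷v. Then W_r is a Zinbiel algebra, and the map f_r: W_r → Z ⋈ W, f_r(u) = (r(u), u), is an injective Zinbiel algebra homomorphism whose image is the Z-complement W̃ = {(r(u), u) : u ∈ W}; in particular W_r ≅ W̃ as Zinbiel algebras. -/
import Mathlib


/-- The bicrossed product multiplication on `Z ⊕ W`. -/
def bMul {k Z W : Type*} [CommRing k] [AddCommGroup Z] [Module k Z]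
    [AddCommGroup W] [Module k W]
    (m : Z →ₗ[k] Z →ₗ[k] Z) (mW : W →ₗ[k] W →ₗ[k] W)
    (tr : Z →ₗ[k] W →ₗ[k] W) (tl : W →ₗ[k] Z →ₗ[k] W)
    (pl : Z →ₗ[k] W →ₗ[k] Z) (pr : W →ₗ[k] Z →ₗ[k] Z)
    (a b : Z × W) : Z × W :=
  (m a.1 b.1 + pl a.1 b.2 + pr a.2 b.1,
   tr a.1 b.2 + tl a.2 b.1 + mW a.2 b.2)

/-- The `r`-deformation multiplication `u ·_r v = u·v + u◁r(v) + r(u)▷v` on `W`. -/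
def defMul {k Z W : Type*} [CommRing k] [AddCommGroup Z] [Module k Z]
    [AddCommGroup W] [Module k W]
    (mW : W →ₗ[k] W →ₗ[k] W)
    (tr : Z →ₗ[k] W →ₗ[k] W) (tl : W →ₗ[k] Z →ₗ[k] W)
    (r : W →ₗ[k] Z) (u v : W) : W :=
  mW u v + tl u (r v) + tr (r u) v

/-- For a deformation map `r` of a matched pair of Zinbiel algebras, the
`r`-deformation `W_r` is a Zinbiel algebra, and `f_r(u) = (r(u), u)` is an
injective Zinbiel algebra homomorphism `W_r → Z ⋈ W` with image
`W̃ = {(r(u), u) : u ∈ W}`; in particular `W_r ≅ W̃`. -/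
theorem stmt10 {k Z W : Type*} [Field k] [CharZero k]
    [AddCommGroup Z] [Module k Z] [AddCommGroup W] [Module k W]
    (m : Z →ₗ[k] Z →ₗ[k] Z)
    (hZ : ∀ x y z : Z, m (m x y) z = m x (m y z + m z y))
    (mW : W →ₗ[k] W →ₗ[k] W)
    (hW : ∀ u v w : W, mW (mW u v) w = mW u (mW v w + mW w v))
    (tr : Z →ₗ[k] W →ₗ[k] W) (tl : W →ₗ[k] Z →ₗ[k] W)
    (pl : Z →ₗ[k] W →ₗ[k] Z) (pr : W →ₗ[k] Z →ₗ[k] Z)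
    (hmp : ∀ a b c : Z × W,
      bMul m mW tr tl pl pr (bMul m mW tr tl pl pr a b) c =
        bMul m mW tr tl pl pr a
          (bMul m mW tr tl pl pr b c + bMul m mW tr tl pl pr c b))
    (r : W →ₗ[k] Z)
    (hr : ∀ u v : W,
      r (mW u v) - m (r u) (r v)
        = pr u (r v) + pl (r u) v - r (tl u (r v) + tr (r u) v)) :
    -- W_r is a Zinbiel algebra
    (∀ u v w : W,
      defMul mW tr tl r (defMul mW tr tl r u v) w =
        defMul mW tr tl r u (defMul mW tr tl r v w + defMul mW tr tl r w v)) ∧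
    -- f_r is injective
    Function.Injective (fun u : W => ((r u, u) : Z × W)) ∧
    -- f_r is a Zinbiel algebra homomorphism W_r → Z ⋈ W
    (∀ u v : W,
      ((r (defMul mW tr tl r u v), defMul mW tr tl r u v) : Z × W)
        = bMul m mW tr tl pl pr (r u, u) (r v, v)) ∧
    -- the image of f_r is W̃
    (Set.range (fun u : W => ((r u, u) : Z × W)) = {a : Z × W | a.1 = r a.2}) := by
  have hom : ∀ u v : W,
      ((r (defMul mW tr tl r u v), defMul mW tr tl r u v) : Z × W)
        = bMul m mW tr tl pl pr (r u, u) (r v, v) := by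
    intro u v
    have h := hr u v
    rw [map_add] at h
    refine Prod.ext ?_ ?_
    · show r (defMul mW tr tl r u v) =
        m (r u) (r v) + pl (r u) v + pr u (r v)
      simp only [defMul, map_add]
      have key : r (mW u v) + r (tl u (r v)) + r (tr (r u) v)
          - (m (r u) (r v) + pl (r u) v + pr u (r v))
          = (r (mW u v) - m (r u) (r v))
            - (pr u (r v) + pl (r u) v - (r (tl u (r v)) + r (tr (r u) v))) := by
        abel
      rw [h, sub_self] at key
      exact sub_eq_zero.mp key
    · show defMul mW tr tl r u v = tr (r u) v + tl u (r v) + mW u v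
      simp only [defMul]; abel
  refine ⟨?_, ?_, hom, ?_⟩
  · intro u v w
    have key := hmp (r u, u) (r v, v) (r w, w)
    rw [← hom u v, ← hom v w, ← hom w v, ← hom (defMul mW tr tl r u v) w] at key
    have hsum : ((r (defMul mW tr tl r v w), defMul mW tr tl r v w) : Z × W)
        + (r (defMul mW tr tl r w v), defMul mW tr tl r w v)
        = (r (defMul mW tr tl r v w + defMul mW tr tl r w v),
           defMul mW tr tl r v w + defMul mW tr tl r w v) := by
      simp [Prod.mk_add_mk, map_add]
    rw [hsum, ← hom u (defMul mW tr tl r v w + defMul mW tr tl r w v)] at key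
    have h2 := congrArg Prod.snd key
    simp only at h2
    exact h2
  · intro u v h
    exact congrArg Prod.snd h
  · ext a
    simp only [Set.mem_range, Set.mem_setOf_eq]
    constructor
    · rintro ⟨u, rfl⟩; rfl
    · intro h; exact ⟨a.2, by rw [← h]⟩
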